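/- arXiv:2007.15995 — 3 statements merged into one kernel-verified Lean document; each statement's English description precedes it below -/
import Mathlib

section
/- Let L ⊆ Q be an extension of Hom-Lie algebras and let q ∈ Q. Then (L:q) is a Hom-ideal of L, and it is the largest Hom-ideal of L among the Hom-ideals I of L satisfying [I,α(q)] ⊆ L; that is, (L:q) is a Hom-ideal, [(L:q),α(q)] ⊆ L, and every Hom-ideal I of L with [I,α(q)] ⊆ L satisfies I ⊆ (L:q). -/
/-- A Hom-Lie algebra structure on a vector space `Q` over a field `𝔽`, with the
twisting map `α` additionally satisfying condition (2.1):
`α [x,y] = [α x, y] = [x, α y]`. -/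
structure HomLieAlgebra (𝔽 : Type*) [Field 𝔽] (Q : Type*) [AddCommGroup Q] [Module 𝔽 Q] where
  bracket : Q →ₗ[𝔽] Q →ₗ[𝔽] Q
  alpha : Q →ₗ[𝔽] Q
  skew : ∀ x y, bracket x y = - bracket y x
  jacobi : ∀ x y z, bracket (alpha x) (bracket y z) + bracket (alpha y) (bracket z x)
      + bracket (alpha z) (bracket x y) = 0
  comm₁ : ∀ x y, alpha (bracket x y) = bracket (alpha x) y
  comm₂ : ∀ x y, alpha (bracket x y) = bracket x (alpha y)

namespace HomLieAlgebra

variable {𝔽 : Type*} [Field 𝔽] {Q : Type*} [AddCommGroup Q] [Module 𝔽 Q]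
variable (H : HomLieAlgebra 𝔽 Q)

/-- `S` is a Hom-subalgebra: a subspace closed under `α` and the bracket. -/
def IsSubalgebra (S : Submodule 𝔽 Q) : Prop :=
  (∀ x ∈ S, H.alpha x ∈ S) ∧ ∀ x ∈ S, ∀ y ∈ S, H.bracket x y ∈ S

/-- `I` is a Hom-ideal of the Hom-subalgebra `L`:
a subspace `I ⊆ L` with `α(I) ⊆ I` and `[I, L] ⊆ I`. -/
def IsIdealOf (L I : Submodule 𝔽 Q) : Prop :=
  I ≤ L ∧ (∀ x ∈ I, H.alpha x ∈ I) ∧ ∀ x ∈ I, ∀ y ∈ L, H.bracket x y ∈ I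

/-- The α-annihilator of the set `S` inside the subalgebra `M`:
`Ann_M(S) = {x ∈ M | [x, α(y)] = 0 for all y ∈ S}`. -/
def annIn (M : Submodule 𝔽 Q) (S : Set Q) : Set Q :=
  {x | x ∈ M ∧ ∀ y ∈ S, H.bracket x (H.alpha y) = 0}

/-- `I` is an essential Hom-ideal of `L`: it hits every nonzero Hom-ideal of `L`. -/
def IsEssentialIdealOf (L I : Submodule 𝔽 Q) : Prop :=
  H.IsIdealOf L I ∧ ∀ J : Submodule 𝔽 Q, H.IsIdealOf L J → J ≠ ⊥ → I ⊓ J ≠ ⊥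

/-- The Hom-Lie algebra `L` is semiprime: `[I, α(I)] ≠ {0}` for every nonzero
Hom-ideal `I` of `L`. -/
def IsSemiprimeOn (L : Submodule 𝔽 Q) : Prop :=
  ∀ I : Submodule 𝔽 Q, H.IsIdealOf L I → I ≠ ⊥ →
    ∃ x ∈ I, ∃ y ∈ I, H.bracket x (H.alpha y) ≠ 0

/-- The Hom-Lie algebra `L` is prime: `[I, α(J)] ≠ {0}` for all nonzero
Hom-ideals `I`, `J` of `L`. -/
def IsPrimeOn (L : Submodule 𝔽 Q) : Prop :=
  ∀ I J : Submodule 𝔽 Q, H.IsIdealOf L I → I ≠ ⊥ → H.IsIdealOf L J → J ≠ ⊥ →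
    ∃ x ∈ I, ∃ y ∈ J, H.bracket x (H.alpha y) ≠ 0

/-- The iterated brackets `[[…[[q,x₁],x₂],…],xₙ]` with `xᵢ ∈ L` (including `q` itself). -/
inductive IsWord (L : Submodule 𝔽 Q) (q : Q) : Q → Prop
  | base : IsWord L q q
  | step {p : Q} (x : Q) : IsWord L q p → x ∈ L → IsWord L q (H.bracket p x)

/-- `_L(q)`: the linear span in `Q` of `q` together with all the iterated brackets
`[[…[[q,x₁],x₂],…],xₙ]` with `xᵢ ∈ L`. -/
def wordSpan (L : Submodule 𝔽 Q) (q : Q) : Submodule 𝔽 Q :=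
  Submodule.span 𝔽 {p | H.IsWord L q p}

/-- `(L : q) = {x ∈ L | [x, α(_L(q))] ⊆ L}`, as a subspace of `Q`. -/
def quotIdeal (L : Submodule 𝔽 Q) (q : Q) : Submodule 𝔽 Q where
  carrier := {x | x ∈ L ∧ ∀ p ∈ H.wordSpan L q, H.bracket x (H.alpha p) ∈ L}
  add_mem' := by
    rintro a b ⟨haL, ha⟩ ⟨hbL, hb⟩
    refine ⟨L.add_mem haL hbL, fun p hp => ?_⟩
    rw [map_add, LinearMap.add_apply]
    exact L.add_mem (ha p hp) (hb p hp)
  zero_mem' := ⟨L.zero_mem, fun p _ => by simp⟩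
  smul_mem' := by
    rintro c a ⟨haL, ha⟩
    refine ⟨L.smul_mem c haL, fun p hp => ?_⟩
    rw [map_smul, LinearMap.smul_apply]
    exact L.smul_mem c (ha p hp)

/-- `Q` is an algebra of quotients of its Hom-subalgebra `L`: for all `p, q ∈ Q` with
`p ≠ 0` there is `x ∈ (L : q)` with `[x, α(p)] ≠ 0`. -/
def IsAlgebraOfQuotients (L : Submodule 𝔽 Q) : Prop :=
  ∀ p q : Q, p ≠ 0 → ∃ x ∈ H.quotIdeal L q, H.bracket x (H.alpha p) ≠ 0

/-- `Q` is a weak algebra of quotients of its Hom-subalgebra `L`: for every nonzero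
`q ∈ Q` there is `x ∈ L` with `0 ≠ [x, α(q)] ∈ L`. -/
def IsWeakAlgebraOfQuotients (L : Submodule 𝔽 Q) : Prop :=
  ∀ q : Q, q ≠ 0 → ∃ x ∈ L, H.bracket x (H.alpha q) ≠ 0 ∧ H.bracket x (H.alpha q) ∈ L

/-- `Q` is ideally absorbed into `L`: for every nonzero `q ∈ Q` there is a Hom-ideal `I`
of `L` with `Ann_L(I) = {0}` and `{0} ≠ [I, α(q)] ⊆ L`. -/
def IsIdeallyAbsorbed (L : Submodule 𝔽 Q) : Prop :=
  ∀ q : Q, q ≠ 0 → ∃ I : Submodule 𝔽 Q, H.IsIdealOf L I ∧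
    H.annIn L (I : Set Q) = {0} ∧
    (∃ y ∈ I, H.bracket y (H.alpha q) ≠ 0) ∧
    ∀ y ∈ I, H.bracket y (H.alpha q) ∈ (L : Set Q)

/-- The inner derivation `ad_q : p ↦ [α(q), p]`. -/
def ad (q : Q) : Module.End 𝔽 Q := H.bracket (H.alpha q)

end HomLieAlgebra

/-
(L : q) is cut out inside L by the conditions [x, α p] ∈ L for the iterated brackets p, since these
span _L(q). All closure properties then come from the single consequence of Jacobi and (2.1)
  [x, α[p,y]] + [[x,y], α p] + [y, [x, α p]] = 0,
read in two directions: for x ∈ (L : q) and y ∈ L it puts [[x,y], α p] in L because [p,y] is again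
an iterated bracket; for x in a Hom-ideal I with [I, α q] ⊆ L it lets an induction on the length
of p put [x, α p] in L.
-/

namespace HomLieAlgebra

variable {𝔽 Q : Type*} [Field 𝔽] [AddCommGroup Q] [Module 𝔽 Q] (H : HomLieAlgebra 𝔽 Q)

lemma bracket_alpha_left (x y : Q) : H.bracket (H.alpha x) y = H.bracket x (H.alpha y) := by
  rw [← H.comm₁, H.comm₂]

lemma jacobi_alpha (x y p : Q) :
    H.bracket x (H.alpha (H.bracket p y)) + H.bracket (H.bracket x y) (H.alpha p)
      + H.bracket y (H.bracket x (H.alpha p)) = 0 := by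
  have hxpy := H.jacobi x p y
  rwa [H.bracket_alpha_left x, H.skew (H.alpha p), H.skew y x, map_neg, LinearMap.neg_apply,
    neg_neg, H.bracket_alpha_left y, H.comm₂ x p] at hxpy

variable {L : Submodule 𝔽 Q} {q : Q}

lemma mem_quotIdeal_iff {x : Q} :
    x ∈ H.quotIdeal L q ↔ x ∈ L ∧ ∀ p, H.IsWord L q p → H.bracket x (H.alpha p) ∈ L := by
  have hspan : (∀ p ∈ H.wordSpan L q, H.bracket x (H.alpha p) ∈ L) ↔
      H.wordSpan L q ≤ L.comap ((H.bracket x).comp H.alpha) := Iff.rfl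
  rw [wordSpan, Submodule.span_le] at hspan
  exact and_congr_right fun _ => hspan

lemma quotIdeal_le : H.quotIdeal L q ≤ L := fun _ hx => hx.1

lemma bracket_alpha_mem_of_mem_quotIdeal {x : Q} (hx : x ∈ H.quotIdeal L q) :
    H.bracket x (H.alpha q) ∈ L :=
  ((H.mem_quotIdeal_iff).1 hx).2 q IsWord.base

lemma alpha_mem_quotIdeal (hL : ∀ x ∈ L, H.alpha x ∈ L) {x : Q} (hx : x ∈ H.quotIdeal L q) :
    H.alpha x ∈ H.quotIdeal L q := by
  rw [mem_quotIdeal_iff] at hx ⊢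
  refine ⟨hL x hx.1, fun p hp => ?_⟩
  rw [← H.comm₁]
  exact hL _ (hx.2 p hp)

lemma bracket_mem_quotIdeal (hL : ∀ x ∈ L, ∀ y ∈ L, H.bracket x y ∈ L) {x y : Q}
    (hx : x ∈ H.quotIdeal L q) (hy : y ∈ L) : H.bracket x y ∈ H.quotIdeal L q := by
  rw [mem_quotIdeal_iff] at hx ⊢
  refine ⟨hL x hx.1 y hy, fun p hp => ?_⟩
  have hxpy : H.bracket x (H.alpha (H.bracket p y)) ∈ L := hx.2 _ (hp.step y hy)
  have hyxp : H.bracket y (H.bracket x (H.alpha p)) ∈ L := hL y hy _ (hx.2 p hp)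
  have hsum := H.jacobi_alpha x y p ▸ L.zero_mem
  exact (L.add_mem_iff_right hxpy).1 ((L.add_mem_iff_left hyxp).1 hsum)

lemma isIdealOf_quotIdeal (hL : H.IsSubalgebra L) : H.IsIdealOf L (H.quotIdeal L q) :=
  ⟨H.quotIdeal_le, fun _ => H.alpha_mem_quotIdeal hL.1,
    fun _ hx _ hy => H.bracket_mem_quotIdeal hL.2 hx hy⟩

lemma le_quotIdeal (hL : ∀ x ∈ L, ∀ y ∈ L, H.bracket x y ∈ L) {I : Submodule 𝔽 Q}
    (hI : H.IsIdealOf L I) (hIq : ∀ x ∈ I, H.bracket x (H.alpha q) ∈ L) :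
    I ≤ H.quotIdeal L q := by
  have hword : ∀ p, H.IsWord L q p → ∀ x ∈ I, H.bracket x (H.alpha p) ∈ L := by
    intro p hp
    induction hp with
    | base => exact hIq
    | @step p z _ hz ih =>
      intro x hx
      have hxzp : H.bracket (H.bracket x z) (H.alpha p) ∈ L := ih _ (hI.2.2 x hx z hz)
      have hzxp : H.bracket z (H.bracket x (H.alpha p)) ∈ L := hL z hz _ (ih x hx)
      have hsum := H.jacobi_alpha x z p ▸ L.zero_mem
      exact (L.add_mem_iff_left hxzp).1 ((L.add_mem_iff_left hzxp).1 hsum)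
  exact fun x hx => (H.mem_quotIdeal_iff).2 ⟨hI.1 hx, fun p hp => hword p hp x hx⟩

end HomLieAlgebra

/-- For an extension `L ⊆ Q` of Hom-Lie algebras and `q ∈ Q`, `(L : q)` is a Hom-ideal
of `L` with `[(L : q), α(q)] ⊆ L`, and it is the largest among Hom-ideals `I` of `L`
with `[I, α(q)] ⊆ L`. -/
theorem quotIdeal_isIdeal_and_maximal
    {𝔽 Q : Type*} [Field 𝔽] [AddCommGroup Q] [Module 𝔽 Q]
    (H : HomLieAlgebra 𝔽 Q) (L : Submodule 𝔽 Q) (hL : H.IsSubalgebra L) (q : Q) :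
    H.IsIdealOf L (H.quotIdeal L q) ∧
    (∀ x ∈ H.quotIdeal L q, H.bracket x (H.alpha q) ∈ L) ∧
    (∀ I : Submodule 𝔽 Q, H.IsIdealOf L I →
      (∀ x ∈ I, H.bracket x (H.alpha q) ∈ L) → I ≤ H.quotIdeal L q) :=
  ⟨H.isIdealOf_quotIdeal hL, fun _ => H.bracket_alpha_mem_of_mem_quotIdeal,
    fun _ hI hIq => H.le_quotIdeal hL.2 hI hIq⟩
end

section
/- Let L ⊆ Q be an extension of Hom-Lie algebras such that Q is a weak algebra of quotients of L. If L is semiprime, then Q is semiprime; and if L is prime, then Q is prime. -/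
/-!
Every nonzero Hom-ideal `I` of `Q` meets `L` in a nonzero Hom-ideal of `L`: for `0 ≠ q ∈ I`, the
weak-quotient condition yields `x ∈ L` with `0 ≠ [x, α q] ∈ L`, and `[x, α q] ∈ I` because `I` is
an ideal and `α(I) ⊆ I`. A nonzero bracket `[x, α y]` with `x, y` in the traces `I ∩ L`, `J ∩ L`
then witnesses (semi)primeness of `Q`.
-/

namespace HomLieAlgebra

variable {𝔽 : Type*} [Field 𝔽] {Q : Type*} [AddCommGroup Q] [Module 𝔽 Q]
variable {H : HomLieAlgebra 𝔽 Q} {L M I : Submodule 𝔽 Q}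

theorem IsIdealOf.bracket_alpha_mem (hI : H.IsIdealOf M I) {x q : Q} (hx : x ∈ M)
    (hq : q ∈ I) : H.bracket x (H.alpha q) ∈ I := by
  rw [H.skew]
  exact I.neg_mem (hI.2.2 _ (hI.2.1 q hq) x hx)

theorem IsIdealOf.inf_of_le (hI : H.IsIdealOf M I) (hL : H.IsSubalgebra L) (hLM : L ≤ M) :
    H.IsIdealOf L (I ⊓ L) :=
  ⟨inf_le_right, fun x hx => ⟨hI.2.1 x hx.1, hL.1 x hx.2⟩,
    fun x hx y hy => ⟨hI.2.2 x hx.1 y (hLM hy), hL.2 x hx.2 y hy⟩⟩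

theorem IsIdealOf.inf_ne_bot_of_isWeakAlgebraOfQuotients (hw : H.IsWeakAlgebraOfQuotients L)
    (hI : H.IsIdealOf ⊤ I) (hI0 : I ≠ ⊥) : I ⊓ L ≠ ⊥ := by
  obtain ⟨q, hqI, hq0⟩ := (Submodule.ne_bot_iff I).mp hI0
  obtain ⟨x, -, hxq0, hxqL⟩ := hw q hq0
  exact (Submodule.ne_bot_iff _).mpr
    ⟨_, ⟨hI.bracket_alpha_mem Submodule.mem_top hqI, hxqL⟩, hxq0⟩

end HomLieAlgebra

/-- If `Q` is a weak algebra of quotients of its Hom-subalgebra `L`, then semiprimeness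
and primeness pass from `L` to `Q`. -/
theorem semiprime_and_prime_lift_of_weakQuotients
    {𝔽 Q : Type*} [Field 𝔽] [AddCommGroup Q] [Module 𝔽 Q]
    (H : HomLieAlgebra 𝔽 Q) (L : Submodule 𝔽 Q) (hL : H.IsSubalgebra L)
    (hw : H.IsWeakAlgebraOfQuotients L) :
    (H.IsSemiprimeOn L → H.IsSemiprimeOn ⊤) ∧ (H.IsPrimeOn L → H.IsPrimeOn ⊤) := by
  have trace (I : Submodule 𝔽 Q) (hI : H.IsIdealOf ⊤ I) (hI0 : I ≠ ⊥) :
      H.IsIdealOf L (I ⊓ L) ∧ I ⊓ L ≠ ⊥ :=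
    ⟨hI.inf_of_le hL le_top, hI.inf_ne_bot_of_isWeakAlgebraOfQuotients hw hI0⟩
  constructor
  · intro hL_semiprime I hI hI0
    obtain ⟨x, hx, y, hy, hxy⟩ := hL_semiprime _ (trace I hI hI0).1 (trace I hI hI0).2
    exact ⟨x, hx.1, y, hy.1, hxy⟩
  · intro hL_prime I J hI hI0 hJ hJ0
    obtain ⟨x, hx, y, hy, hxy⟩ :=
      hL_prime _ _ (trace I hI hI0).1 (trace I hI hI0).2 (trace J hJ hJ0).1 (trace J hJ hJ0).2
    exact ⟨x, hx.1, y, hy.1, hxy⟩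
end

section
/- Let L be a Hom-Lie algebra with Ann(L) = {0} and let I be a Hom-ideal of L. Then Ann_L(I) = {0} if and only if rann_{A(L)}(A_L(I)) = {0}, where A(L) is the associative subalgebra of End(L) generated by {ad_x : x ∈ L}, A_L(I) is the associative subalgebra of A(L) generated by {ad_y : y ∈ I}, and rann_{A(L)}(A_L(I)) = {μ ∈ A(L) : νμ = 0 for all ν ∈ A_L(I)}. -/
/-!
If `x ∈ Ann_L(I)`, the Jacobi identity and (2.1) give `ad_y ∘ ad_x = 0` for every `y ∈ I`, so
`ad_x` lies in the right annihilator of `A_L(I)`; conversely, `ad_y ∘ μ = 0` for all `y ∈ I`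
puts the whole image of `μ` into `Ann_L(I)`. Together with `x ∈ Ann(L) ↔ ad_x = 0` this
transports each of the two vanishing conditions to the other.
-/

theorem NonUnitalAlgebra.mul_eq_zero_of_mem_adjoin {R A : Type*} [CommSemiring R]
    [NonUnitalSemiring A] [Module R A] [IsScalarTower R A A] [SMulCommClass R A A]
    {s : Set A} {a : A} (hs : ∀ b ∈ s, b * a = 0) {ν : A} (hν : ν ∈ adjoin R s) :
    ν * a = 0 := by
  induction hν using adjoin_induction with
  | mem b hb => exact hs b hb
  | add b c _ _ hb hc => rw [add_mul, hb, hc, add_zero]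
  | zero => rw [zero_mul]
  | mul b c _ _ _ hc => rw [mul_assoc, hc, mul_zero]
  | smul r b _ hb => rw [smul_mul_assoc, hb, smul_zero]

namespace HomLieAlgebra

variable {𝔽 Q : Type*} [Field 𝔽] [AddCommGroup Q] [Module 𝔽 Q] (H : HomLieAlgebra 𝔽 Q)

@[simp]
theorem ad_apply (x y : Q) : H.ad x y = H.bracket (H.alpha x) y := rfl

theorem bracket_alpha_right (x y : Q) : H.bracket x (H.alpha y) = H.bracket (H.alpha x) y := by
  rw [← H.comm₁, H.comm₂]

theorem zero_mem_annIn (M : Submodule 𝔽 Q) (S : Set Q) : 0 ∈ H.annIn M S :=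
  ⟨M.zero_mem, fun _ _ => by simp⟩

theorem mem_annIn_top_univ_iff {x : Q} : x ∈ H.annIn ⊤ Set.univ ↔ H.ad x = 0 := by
  simp only [annIn, Submodule.mem_top, Set.mem_univ, true_implies, true_and,
    bracket_alpha_right, LinearMap.ext_iff, ad_apply, LinearMap.zero_apply]
  rfl

theorem apply_mem_annIn_of_ad_mul_eq_zero {S : Set Q} {μ : Module.End 𝔽 Q}
    (hμ : ∀ y ∈ S, H.ad y * μ = 0) (z : Q) : μ z ∈ H.annIn ⊤ S := by
  refine ⟨trivial, fun y hy => ?_⟩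
  rw [H.skew, ← ad_apply, ← Module.End.mul_apply, hμ y hy, LinearMap.zero_apply, neg_zero]

theorem ad_mul_ad_eq_zero_of_mem_annIn {I : Submodule 𝔽 Q} (hI : H.IsIdealOf ⊤ I) {x y : Q}
    (hx : x ∈ H.annIn ⊤ (I : Set Q)) (hy : y ∈ I) : H.ad y * H.ad x = 0 := by
  have hxI : ∀ w ∈ I, H.bracket (H.alpha x) w = 0 := fun w hw => by
    rw [← bracket_alpha_right]; exact hx.2 w hw
  ext z
  have hzy : H.bracket (H.alpha x) (H.bracket z y) = 0 :=
    hxI _ (by rw [H.skew]; exact I.neg_mem (hI.2.2 y hy z trivial))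
  have hyx : H.alpha (H.bracket y x) = 0 := by
    rw [H.comm₁, H.skew, hx.2 y hy, neg_zero]
  have hyxz : H.bracket (H.alpha y) (H.bracket x z) = 0 := by
    have jac := H.jacobi y x z
    rwa [hzy, add_zero, ← H.bracket_alpha_right z, hyx, map_zero, add_zero] at jac
  -- `[α y, [α x, z]] = α [α y, [x, z]]` by (2.1)
  simp only [Module.End.mul_apply, ad_apply, LinearMap.zero_apply]
  rw [← H.comm₁ x z, ← H.comm₂, hyxz, map_zero]

end HomLieAlgebra

/-- For a Hom-Lie algebra `L` with `Ann(L) = {0}` and a Hom-ideal `I` of `L`,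
`Ann_L(I) = {0}` iff `rann_{A(L)}(A_L(I)) = {0}`, where `A(L)` is the (possibly
non-unital) associative subalgebra of `End(L)` generated by the inner derivations
`ad_x` (`x ∈ L`) and `A_L(I)` the subalgebra generated by `ad_y` (`y ∈ I`). -/
theorem annL_eq_zero_iff_rann_eq_zero
    {𝔽 L : Type*} [Field 𝔽] [AddCommGroup L] [Module 𝔽 L]
    (H : HomLieAlgebra 𝔽 L) (hann : H.annIn ⊤ (Set.univ : Set L) = {0})
    (I : Submodule 𝔽 L) (hI : H.IsIdealOf ⊤ I) :
    H.annIn ⊤ (I : Set L) = {0} ↔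
      {μ : Module.End 𝔽 L | μ ∈ NonUnitalAlgebra.adjoin 𝔽 (Set.range H.ad) ∧
        ∀ ν ∈ NonUnitalAlgebra.adjoin 𝔽 (H.ad '' (I : Set L)), ν * μ = 0} = {0} := by
  have ad_mem_gen {y : L} (hy : y ∈ I) : H.ad y ∈ NonUnitalAlgebra.adjoin 𝔽 (H.ad '' I) :=
    NonUnitalAlgebra.subset_adjoin 𝔽 ⟨y, hy, rfl⟩
  simp only [Set.eq_singleton_iff_unique_mem]
  constructor
  · rintro ⟨-, hA⟩
    refine ⟨⟨zero_mem _, fun ν _ => mul_zero ν⟩, fun μ ⟨_, hμ⟩ => LinearMap.ext fun z => ?_⟩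
    exact hA _ (H.apply_mem_annIn_of_ad_mul_eq_zero (fun y hy => hμ _ (ad_mem_gen hy)) z)
  · rintro ⟨-, hr⟩
    refine ⟨H.zero_mem_annIn _ _, fun x hx => ?_⟩
    have hadx : H.ad x = 0 := hr _ ⟨NonUnitalAlgebra.subset_adjoin 𝔽 ⟨x, rfl⟩,
      fun ν hν => NonUnitalAlgebra.mul_eq_zero_of_mem_adjoin
        (by rintro _ ⟨y, hy, rfl⟩; exact H.ad_mul_ad_eq_zero_of_mem_annIn hI hx hy) hν⟩
    exact Set.eq_singleton_iff_unique_mem.1 hann |>.2 x (H.mem_annIn_top_univ_iff.2 hadx)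
end
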